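/- Differentiating twice with respect to p and setting p = 0, the product of propagators along a chain satisfies: (1/(2d)) [∂_{p_μ}∂_{p_μ} ∏_a P(p + k_a)]_{p=0} = ∏_a P(k_a) · { Σ_a [ ((4-d)/d) P(k_a) - (4/d) P(k_a)² ] + Σ_{a'<a} (4/d) (P_μ(k_a)/P(k_a)) (P_μ(k_{a'})/P(k_{a'})) }, where P(k) = 1/(1+k²) and P_μ(k) = k_μ/(1+k²)². -/

import Mathlib

open Finset

/-- The propagator `P(k) = 1/(1+|k|²)`. -/
noncomputable def Pprop {d : ℕ} (k : EuclideanSpace ℝ (Fin d)) : ℝ :=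
  (1 + ‖k‖ ^ 2)⁻¹

/-- The vector propagator `P_μ(k) = k_μ/(1+|k|²)²`. -/
noncomputable def Pvec {d : ℕ} (μ : Fin d) (k : EuclideanSpace ℝ (Fin d)) : ℝ :=
  k μ / (1 + ‖k‖ ^ 2) ^ 2

open scoped RealInnerProductSpace

/-!
Write `g_a(p) = P(p + k_a)`. Because no `g_a` vanishes, the Leibniz rule for the second
directional derivative of a product takes the logarithmic form
`∂_v² ∏ g_a = ∏ g_a · (Σ_a ∂_v² g_a / g_a + Σ_{a ≠ c} (∂_v g_a / g_a) (∂_v g_c / g_c))`,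
and for the propagator `∂_v P / P = -2 P ⟪k, v⟫`, `∂_v² P / P = 8 P² ⟪k, v⟫² - 2 P ‖v‖²`.
Summing over the coordinate directions `v = e_μ` turns `⟪k, e_μ⟫ ⟪k', e_μ⟫` into `⟪k, k'⟫` and
`‖e_μ‖²` into `d`; then `P ‖k‖² = 1 - P`, and the symmetric double sum over `a ≠ c` is twice
the sum over `c < a`.
-/

section ProductRule

variable {ι E : Type*} [DecidableEq ι] [NormedAddCommGroup E] [NormedSpace ℝ E]
  {g : ι → E → ℝ} {s : Finset ι} {x v : E}

theorem fderiv_fderiv_finsetProd_apply (hg : ∀ a ∈ s, Differentiable ℝ (g a))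
    (hg' : ∀ a ∈ s, DifferentiableAt ℝ (fun y => fderiv ℝ (g a) y v) x) :
    fderiv ℝ (fun y => fderiv ℝ (fun z => ∏ a ∈ s, g a z) y v) x v =
      ∑ a ∈ s, ((∏ b ∈ s.erase a, g b x) * fderiv ℝ (fun y => fderiv ℝ (g a) y v) x v +
        fderiv ℝ (g a) x v *
          ∑ c ∈ s.erase a, (∏ b ∈ (s.erase a).erase c, g b x) * fderiv ℝ (g c) x v) := by
  have hfirst : (fun y => fderiv ℝ (fun z => ∏ a ∈ s, g a z) y v) =
      fun y => ∑ a ∈ s, (∏ b ∈ s.erase a, g b y) * fderiv ℝ (g a) y v := by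
    funext y
    simp [fderiv_finsetProd fun a ha => hg a ha y]
  have hsecond := HasFDerivAt.fun_sum (u := s) fun a ha =>
    (HasFDerivAt.finsetProd (u := s.erase a) fun b hb =>
      (hg b (mem_of_mem_erase hb) x).hasFDerivAt).fun_mul (hg' a ha).hasFDerivAt
  rw [hfirst, hsecond.fderiv]
  simp

theorem fderiv_fderiv_finsetProd_apply_eq_prod_mul (hg : ∀ a ∈ s, Differentiable ℝ (g a))
    (hg' : ∀ a ∈ s, DifferentiableAt ℝ (fun y => fderiv ℝ (g a) y v) x)
    (hx : ∀ a ∈ s, g a x ≠ 0) :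
    fderiv ℝ (fun y => fderiv ℝ (fun z => ∏ a ∈ s, g a z) y v) x v =
      (∏ a ∈ s, g a x) * ∑ a ∈ s, (fderiv ℝ (fun y => fderiv ℝ (g a) y v) x v / g a x +
        ∑ c ∈ s.erase a, fderiv ℝ (g c) x v / g c x * (fderiv ℝ (g a) x v / g a x)) := by
  rw [fderiv_fderiv_finsetProd_apply hg hg', mul_sum]
  refine sum_congr rfl fun a ha => ?_
  rw [mul_add, mul_sum, mul_sum, ← mul_prod_erase s _ ha]
  congr 1
  · field_simp [hx a ha]
  · refine sum_congr rfl fun c hc => ?_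
    rw [← mul_prod_erase _ _ hc]
    field_simp [hx a ha, hx c (mem_of_mem_erase hc)]

end ProductRule

theorem Finset.sum_sum_erase_eq_sum_sum_filter_lt {ι M : Type*} [LinearOrder ι]
    [AddCommMonoid M] (s : Finset ι) (f : ι → ι → M) :
    ∑ a ∈ s, ∑ c ∈ s.erase a, f a c = ∑ a ∈ s, ∑ c ∈ s.filter (· < a), (f a c + f c a) := by
  have hsplit : ∀ a, ∑ c ∈ s.erase a, f a c =
      ∑ c ∈ s.filter (· < a), f a c + ∑ c ∈ s.filter (a < ·), f a c := fun a => by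
    rw [← sum_filter_add_sum_filter_not (s.erase a) (· < a)]
    congr 1 <;> congr 1 <;> ext c <;> simp only [mem_filter, mem_erase] <;> grind
  have hswap : ∑ a ∈ s, ∑ c ∈ s.filter (a < ·), f a c = ∑ c ∈ s, ∑ a ∈ s.filter (· < c), f a c :=
    sum_comm' fun a c => by simp only [mem_filter]; tauto
  simp only [hsplit, sum_add_distrib, hswap]

section EuclideanSpace

variable {ι : Type*} [Fintype ι]

lemma EuclideanSpace.inner_single_one_right [DecidableEq ι] (x : EuclideanSpace ℝ ι) (μ : ι) :
    ⟪x, EuclideanSpace.single μ 1⟫ = x μ := by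
  simp [EuclideanSpace.inner_single_right]

lemma EuclideanSpace.sum_mul_eq_inner (x y : EuclideanSpace ℝ ι) : ∑ μ, x μ * y μ = ⟪x, y⟫ := by
  simp [PiLp.inner_apply, mul_comm]

end EuclideanSpace

section Propagator

variable {d : ℕ}

lemma Pprop_pos (x : EuclideanSpace ℝ (Fin d)) : 0 < Pprop x := by
  unfold Pprop; positivity

lemma Pprop_mul_norm_sq (x : EuclideanSpace ℝ (Fin d)) : Pprop x * ‖x‖ ^ 2 = 1 - Pprop x := by
  have h : Pprop x * (1 + ‖x‖ ^ 2) = 1 := inv_mul_cancel₀ (by positivity)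
  linarith

lemma contDiff_Pprop {n : WithTop ℕ∞} : ContDiff ℝ n (Pprop (d := d)) :=
  (contDiff_const.add (contDiff_norm_sq ℝ)).inv fun _ => by positivity

lemma differentiable_Pprop : Differentiable ℝ (Pprop (d := d)) :=
  contDiff_Pprop.differentiable one_ne_zero

lemma differentiable_fderiv_Pprop_apply (v : EuclideanSpace ℝ (Fin d)) :
    Differentiable ℝ fun y => fderiv ℝ Pprop y v :=
  ((contDiff_Pprop.fderiv_right (m := 1) le_rfl).clm_apply contDiff_const).differentiable
    one_ne_zero

lemma hasFDerivAt_Pprop (x : EuclideanSpace ℝ (Fin d)) :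
    HasFDerivAt Pprop ((-2 * Pprop x ^ 2) • innerSL ℝ x) x := by
  have h := (hasDerivAt_inv (by positivity : (1 : ℝ) + ‖x‖ ^ 2 ≠ 0)).comp_hasFDerivAt x
    ((hasFDerivAt_id x).norm_sq.const_add 1)
  refine h.congr_fderiv (ContinuousLinearMap.ext fun y => ?_)
  simp only [Pprop, id_eq, ContinuousLinearMap.comp_id, neg_smul, neg_apply, smul_apply,
    coe_innerSL_apply, nsmul_eq_mul, smul_eq_mul, inv_pow]
  ring

lemma fderiv_Pprop_apply (x v : EuclideanSpace ℝ (Fin d)) :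
    fderiv ℝ Pprop x v = -2 * Pprop x ^ 2 * ⟪x, v⟫ := by
  simp [(hasFDerivAt_Pprop x).fderiv]

lemma fderiv_fderiv_Pprop_apply (x v : EuclideanSpace ℝ (Fin d)) :
    fderiv ℝ (fun y => fderiv ℝ Pprop y v) x v =
      8 * Pprop x ^ 3 * ⟪x, v⟫ ^ 2 - 2 * Pprop x ^ 2 * ‖v‖ ^ 2 := by
  have h : HasFDerivAt (fun y => -2 * Pprop y ^ 2 * ⟪y, v⟫)
      ((-2 * Pprop x ^ 2) • innerSL ℝ v +
        ⟪x, v⟫ • (-2 * (2 * Pprop x)) • (-2 * Pprop x ^ 2) • innerSL ℝ x) x := by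
    refine (((hasFDerivAt_Pprop x).pow 2).const_mul (-2)).mul
      ((innerSL ℝ v).hasFDerivAt.congr_of_eventuallyEq
        (Filter.Eventually.of_forall fun y => real_inner_comm v y)) |>.congr_fderiv ?_
    ext y
    simp only [Nat.add_one_sub_one, pow_one, nsmul_eq_mul, add_apply, smul_apply,
      coe_innerSL_apply, smul_eq_mul]
    ring
  rw [funext (fderiv_Pprop_apply · v), h.fderiv]
  simp only [add_apply, smul_apply, coe_innerSL_apply, real_inner_self_eq_norm_sq, smul_eq_mul]
  ring

lemma sum_Pvec_div_mul_Pvec_div (x y : EuclideanSpace ℝ (Fin d)) :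
    ∑ μ, Pvec μ x / Pprop x * (Pvec μ y / Pprop y) = Pprop x * Pprop y * ⟪x, y⟫ := by
  have hPvec : ∀ z : EuclideanSpace ℝ (Fin d), ∀ μ, Pvec μ z / Pprop z = Pprop z * z μ := by
    intro z μ
    simp only [Pvec, Pprop]
    field_simp
  simp only [hPvec, ← EuclideanSpace.sum_mul_eq_inner, mul_sum]
  exact sum_congr rfl fun μ _ => by ring

variable {ι : Type*} [DecidableEq ι]

theorem fderiv_fderiv_prod_Pprop_add_apply (s : Finset ι) (k : ι → EuclideanSpace ℝ (Fin d))
    (x v : EuclideanSpace ℝ (Fin d)) :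
    fderiv ℝ (fun q => fderiv ℝ (fun p => ∏ a ∈ s, Pprop (p + k a)) q v) x v =
      (∏ a ∈ s, Pprop (x + k a)) * ∑ a ∈ s,
        (8 * Pprop (x + k a) ^ 2 * ⟪x + k a, v⟫ ^ 2 - 2 * Pprop (x + k a) * ‖v‖ ^ 2 +
          ∑ c ∈ s.erase a,
            4 * Pprop (x + k c) * Pprop (x + k a) * ⟪x + k c, v⟫ * ⟪x + k a, v⟫) := by
  have hdiff : ∀ a ∈ s, Differentiable ℝ fun p => Pprop (p + k a) := fun a _ =>
    differentiable_Pprop.comp (differentiable_id.add_const (k a))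
  have hdiff' : ∀ a ∈ s, DifferentiableAt ℝ (fun y => fderiv ℝ (fun p => Pprop (p + k a)) y v) x :=
    fun a _ => by
      simp only [fderiv_comp_add_right]
      exact (differentiable_fderiv_Pprop_apply v).comp (differentiable_id.add_const (k a)) x
  rw [fderiv_fderiv_finsetProd_apply_eq_prod_mul hdiff hdiff' fun a _ => (Pprop_pos _).ne']
  refine congrArg _ (sum_congr rfl fun a _ => ?_)
  have hP := (Pprop_pos (x + k a)).ne'
  simp only [fderiv_comp_add_right]
  rw [fderiv_comp_add_right (f := fun y => fderiv ℝ Pprop y v), fderiv_fderiv_Pprop_apply]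
  simp only [fderiv_Pprop_apply]
  congr 1
  · field_simp
  · refine sum_congr rfl fun c _ => ?_
    have hP' := (Pprop_pos (x + k c)).ne'
    field_simp
    ring

theorem sum_fderiv_fderiv_prod_Pprop_add_single (s : Finset ι)
    (k : ι → EuclideanSpace ℝ (Fin d)) (x : EuclideanSpace ℝ (Fin d)) :
    ∑ μ : Fin d, fderiv ℝ (fun q => fderiv ℝ (fun p => ∏ a ∈ s, Pprop (p + k a)) q
        (EuclideanSpace.single μ 1)) x (EuclideanSpace.single μ 1) =
      (∏ a ∈ s, Pprop (x + k a)) * ∑ a ∈ s,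
        ((8 - 2 * d) * Pprop (x + k a) - 8 * Pprop (x + k a) ^ 2 +
          ∑ c ∈ s.erase a, 4 * Pprop (x + k c) * Pprop (x + k a) * ⟪x + k c, x + k a⟫) := by
  simp only [fderiv_fderiv_prod_Pprop_add_apply, EuclideanSpace.inner_single_one_right,
    PiLp.norm_single, norm_one, ← mul_sum]
  congr 1
  rw [sum_comm]
  refine sum_congr rfl fun a _ => ?_
  have hnorm := Pprop_mul_norm_sq (x + k a)
  rw [← real_inner_self_eq_norm_sq, ← EuclideanSpace.sum_mul_eq_inner] at hnorm
  simp only [sum_add_distrib, sum_sub_distrib, ← EuclideanSpace.sum_mul_eq_inner, mul_sum]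
  rw [sum_comm]
  congr 1
  · simp only [mul_one, ← mul_sum, sum_const, card_univ, Fintype.card_fin, nsmul_eq_mul, pow_two]
    linear_combination 8 * Pprop (x + k a) * hnorm
  · exact sum_congr rfl fun c _ => sum_congr rfl fun μ _ => by ring

end Propagator

/-- The identity (chainD): `(1/(2d)) [∂_{p_μ}∂_{p_μ} ∏_a P(p + k_a)]_{p=0}`
equals `∏_a P(k_a) · { Σ_a [((4-d)/d) P(k_a) - (4/d) P(k_a)²]
+ Σ_{a'<a} (4/d)(P_μ(k_a)/P(k_a))(P_μ(k_{a'})/P(k_{a'})) }` (μ summed). -/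
theorem stmt17 (d m : ℕ) (hd : 0 < d) (k : Fin m → EuclideanSpace ℝ (Fin d)) :
    (1 / (2 * (d : ℝ))) * ∑ μ : Fin d,
      fderiv ℝ (fun q : EuclideanSpace ℝ (Fin d) =>
          fderiv ℝ (fun p : EuclideanSpace ℝ (Fin d) => ∏ a, Pprop (p + k a)) q
            (EuclideanSpace.single μ 1)) 0 (EuclideanSpace.single μ 1)
    = (∏ a, Pprop (k a)) *
      ((∑ a, (((4 : ℝ) - d) / d * Pprop (k a) - 4 / d * Pprop (k a) ^ 2)) +
        ∑ a, ∑ a' ∈ Finset.univ.filter (· < a),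
          4 / (d : ℝ) * ∑ μ : Fin d,
            (Pvec μ (k a) / Pprop (k a)) * (Pvec μ (k a') / Pprop (k a'))) := by
  have hd' : (d : ℝ) ≠ 0 := by positivity
  rw [sum_fderiv_fderiv_prod_Pprop_add_single, sum_add_distrib,
    sum_sum_erase_eq_sum_sum_filter_lt]
  simp only [zero_add, sum_Pvec_div_mul_Pvec_div]
  rw [mul_left_comm, mul_add, mul_sum, mul_sum]
  congr 2
  · exact sum_congr rfl fun a _ => by field_simp; ring
  · refine sum_congr rfl fun a _ => ?_
    rw [mul_sum]
    refine sum_congr rfl fun c _ => ?_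
    rw [real_inner_comm (k a)]
    field_simp
    ring
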